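/- arXiv:2311.08407 — 13 statements merged into one kernel-verified Lean document; each statement's English description precedes it below -/
import Mathlib

section
/- Let (A,·,α) be a multiplicative Hom-associative algebra. Then (A,[·,·],α) with [x,y] = x·y − y·x is a Hom-Lie algebra, i.e. the bracket is antisymmetric and satisfies the Hom-Jacobi identity [α(x),[y,z]] + [α(y),[z,x]] + [α(z),[x,y]] = 0. -/
/-- Hom-associativity: (x·y)·α(z) = α(x)·(y·z). -/
def IsHomAssoc {A : Type*} (m : A → A → A) (a : A → A) : Prop :=
  ∀ x y z, m (m x y) (a z) = m (a x) (m y z)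

/-- Hom-Lie algebra: antisymmetric bracket with Hom-Jacobi identity. -/
def IsHomLie {A : Type*} [AddCommGroup A] (b : A → A → A) (a : A → A) : Prop :=
  (∀ x y, b x y = - b y x) ∧
  (∀ x y z, b (a x) (b y z) + b (a y) (b z x) + b (a z) (b x y) = 0)

/-- (left) Hom-Leibniz identity. -/
def IsHomLeibniz {A : Type*} [AddCommGroup A] (b : A → A → A) (a : A → A) : Prop :=
  ∀ x y z, b (a x) (b y z) = b (b x y) (a z) + b (a y) (b x z)

/-- Hom-Jordan algebra: commutative with α(x²)∘(α(y)∘α(x)) = (x²∘α(y))∘α²(x). -/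
def IsHomJordan {A : Type*} (m : A → A → A) (a : A → A) : Prop :=
  (∀ x y, m x y = m y x) ∧
  (∀ x y, m (a (m x x)) (m (a y) (a x)) = m (m (m x x) (a y)) (a (a x)))

/-- Hom-associative dialgebra with left product `vd` (⊢) and right product `dv` (⊣). -/
def IsHomDialg {A : Type*} (vd dv : A → A → A) (a : A → A) : Prop :=
  (∀ x y z, vd (dv x y) (a z) = vd (vd x y) (a z)) ∧
  (∀ x y z, dv (a x) (dv y z) = dv (a x) (vd y z)) ∧
  (∀ x y z, dv (dv x y) (a z) = dv (a x) (dv y z)) ∧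
  (∀ x y z, vd (vd x y) (a z) = vd (a x) (vd y z)) ∧
  (∀ x y z, dv (vd x y) (a z) = vd (a x) (dv y z))

/-- Left Hom-Jordan dialgebra. -/
def IsHomJordanDialg {A : Type*} [AddCommGroup A] (m : A → A → A) (a : A → A) : Prop :=
  (∀ x1 x2 x3, m (m x1 x2) x3 = m (m x2 x1) x3) ∧
  (∀ x1 x2 x3 x4,
    m (m (m x4 x3) (a x2)) (a (a x1)) + m (a (a x4)) (m (a x2) (m x3 x1))
      + m (a (a x3)) (m (a x2) (m x4 x1))
    = m (a (m x4 x3)) (m (a x2) (a x1)) + m (m (a x4) (a x2)) (a (m x3 x1))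
      + m (m (a x3) (a x2)) (a (m x4 x1))) ∧
  (∀ x1 x2 x3 x4,
    m (a (a x1)) (m (m x4 x3) x2) + m (a (a x4)) (m (m x3 x1) x2)
      + m (a (a x3)) (m (m x4 x1) x2)
    = m (a (m x4 x3)) (m (a x1) x2) + m (a (m x1 x3)) (m (a x4) x2)
      + m (a (m x4 x1)) (m (a x3) x2))

/-- Hom-associative trialgebra with products ⊢ = `vd`, ⊣ = `dv`, ⊥ = `mp`. -/
def IsHomTrialg {A : Type*} (vd dv mp : A → A → A) (a : A → A) : Prop :=
  IsHomDialg vd dv a ∧ IsHomAssoc mp a ∧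
  (∀ x y z, dv (dv x y) (a z) = dv (a x) (mp y z)) ∧
  (∀ x y z, dv (mp x y) (a z) = mp (a x) (dv y z)) ∧
  (∀ x y z, mp (dv x y) (a z) = mp (a x) (vd y z)) ∧
  (∀ x y z, mp (vd x y) (a z) = vd (a x) (mp y z)) ∧
  (∀ x y z, vd (mp x y) (a z) = vd (a x) (vd y z))

/-- Left Hom-Leibniz trialgebra: Hom-Leibniz bracket `br`, Hom-Lie bracket `lie`,
plus the two compatibilities. -/
def IsHomLeibnizTrialg {A : Type*} [AddCommGroup A] (br lie : A → A → A) (a : A → A) : Prop :=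
  IsHomLeibniz br a ∧ IsHomLie lie a ∧
  (∀ x y z, br (a x) (lie y z) = lie (br x y) (a z) + lie (a y) (br x z)) ∧
  (∀ x y z, br (lie x y) (a z) = br (br x y) (a z))

/-- Bimodule of a Hom-associative algebra. -/
def IsBimodule {A V : Type*} (mul : A → A → A) (al : A → A)
    (l r : A → V → V) (be : V → V) : Prop :=
  (∀ x u, be (l x u) = l (al x) (be u)) ∧
  (∀ x u, be (r x u) = r (al x) (be u)) ∧
  (∀ x y u, l (mul x y) (be u) = l (al x) (l y u)) ∧
  (∀ x y u, r (mul x y) (be u) = r (al y) (r x u)) ∧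
  (∀ x y u, l (al x) (r y u) = r (al y) (l x u))

/-- Representation of a Hom-Lie algebra. -/
def IsHomLieRep {A V : Type*} [AddCommGroup V] (br : A → A → A) (al : A → A)
    (rho : A → V → V) (be : V → V) : Prop :=
  (∀ x u, be (rho x u) = rho (al x) (be u)) ∧
  (∀ x y u, rho (br x y) (be u) = rho (al x) (rho y u) - rho (al y) (rho x u))

/-- Representation of a Hom-Jordan algebra. -/
def IsHomJordanRep {A V : Type*} [AddCommGroup V] (m : A → A → A) (al : A → A)
    (pi : A → V → V) (be : V → V) : Prop :=
  (∀ x u, be (pi x u) = pi (al x) (be u)) ∧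
  (∀ x y z u,
    pi (al (al x)) (pi (m y z) (be u)) + pi (al (al y)) (pi (m z x) (be u))
      + pi (al (al z)) (pi (m x y) (be u))
    = pi (m (al x) (al y)) (pi (al z) (be u)) + pi (m (al y) (al z)) (pi (al x) (be u))
      + pi (m (al z) (al x)) (pi (al y) (be u))) ∧
  (∀ x y z u,
    pi (m (m x y) (al z)) (be (be u)) + pi (al (al x)) (pi (al z) (pi y u))
      + pi (al (al y)) (pi (al z) (pi x u))
    = pi (m (al x) (al y)) (pi (al z) (be u)) + pi (m (al y) (al z)) (pi (al x) (be u))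
      + pi (m (al x) (al z)) (pi (al y) (be u)))

/-- Action of a Hom-associative algebra (A,·,α) on a Hom-associative algebra (V,·_V,β). -/
def IsHomAssocAction {A V : Type*} (mul : A → A → A) (al : A → A)
    (l r : A → V → V) (be : V → V) (mulV : V → V → V) : Prop :=
  IsBimodule mul al l r be ∧ IsHomAssoc mulV be ∧
  (∀ x u v, l (al x) (mulV u v) = mulV (l x u) (be v)) ∧
  (∀ x u v, r (al x) (mulV u v) = mulV (be u) (r x v)) ∧
  (∀ x u v, mulV (be u) (l x v) = mulV (r x u) (be v))

/-- Action of a Hom-Lie algebra (A,[·,·],α) on a Hom-Lie algebra (V,[·,·]_V,β). -/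
def IsHomLieAction {A V : Type*} [AddCommGroup V] (br : A → A → A) (al : A → A)
    (rho : A → V → V) (be : V → V) (brV : V → V → V) : Prop :=
  IsHomLieRep br al rho be ∧ IsHomLie brV be ∧
  (∀ x u v, rho (al x) (brV u v) = brV (rho x u) (be v) + brV (be u) (rho x v))

/-! The Hom-Jacobi sum of the commutator bracket `[x, y] = x·y - y·x` is, up to sign, the
alternating sum over the six permutations of `(x, y, z)` of the Hom-associator
`as(x, y, z) = (x·y)·α(z) - α(x)·(y·z)`, and Hom-associativity says that every Hom-associator
vanishes. -/

section HomAssociator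

variable {A : Type*} [AddCommGroup A]

def homAssociator (m : A → A → A) (a : A → A) (x y z : A) : A :=
  m (m x y) (a z) - m (a x) (m y z)

theorem isHomAssoc_iff_homAssociator_eq_zero (m : A → A → A) (a : A → A) :
    IsHomAssoc m a ↔ ∀ x y z, homAssociator m a x y z = 0 := by
  simp only [IsHomAssoc, homAssociator, sub_eq_zero]

variable {R : Type*} [CommSemiring R] [Module R A]

theorem homJacobi_commutator_eq_neg_sum_homAssociator (mul : A →ₗ[R] A →ₗ[R] A) (α : A → A)
    (x y z : A) :
    let br : A → A → A := fun u v => mul u v - mul v u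
    let as := homAssociator (fun u v => mul u v) α
    br (α x) (br y z) + br (α y) (br z x) + br (α z) (br x y) =
      -(as x y z - as x z y - as y x z + as y z x + as z x y - as z y x) := by
  simp only [homAssociator, map_sub, LinearMap.sub_apply]
  abel

theorem isHomLie_commutator_of_isHomAssoc (mul : A →ₗ[R] A →ₗ[R] A) (α : A → A)
    (hassoc : IsHomAssoc (fun x y => mul x y) α) :
    IsHomLie (fun x y => mul x y - mul y x) α := by
  rw [isHomAssoc_iff_homAssociator_eq_zero] at hassoc
  refine ⟨fun x y => (neg_sub _ _).symm, fun x y z => ?_⟩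
  rw [homJacobi_commutator_eq_neg_sum_homAssociator]
  simp only [hassoc, sub_zero, add_zero, neg_zero]

end HomAssociator

theorem stmt0_general {K : Type*} [Field K] {A : Type*} [AddCommGroup A] [Module K A]
    (mul : A →ₗ[K] A →ₗ[K] A) (α : A →ₗ[K] A)
    (hassoc : IsHomAssoc (fun x y => mul x y) (fun x => α x)) :
    IsHomLie (fun x y => mul x y - mul y x) (fun x => α x) :=
  isHomLie_commutator_of_isHomAssoc mul α hassoc

theorem stmt0 {K : Type*} [Field K] {A : Type*} [AddCommGroup A] [Module K A]
    (mul : A →ₗ[K] A →ₗ[K] A) (α : A →ₗ[K] A)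
    (hassoc : IsHomAssoc (fun x y => mul x y) (fun x => α x))
    (hmult : ∀ x y, α (mul x y) = mul (α x) (α y)) :
    IsHomLie (fun x y => mul x y - mul y x) (fun x => α x) :=
  stmt0_general mul α hassoc
end

section
/- Let (A,·,α) be a multiplicative Hom-associative algebra. Then (A,∘,α) with x∘y = x·y + y·x is a Hom-Jordan algebra: ∘ is commutative and satisfies α(x∘x)∘(α(y)∘α(x)) = ((x∘x)∘α(y))∘α²(x) for all x,y. -/
theorem stmt1 {K : Type*} [Field K] {A : Type*} [AddCommGroup A] [Module K A]
    (mul : A →ₗ[K] A →ₗ[K] A) (α : A →ₗ[K] A)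
    (hassoc : IsHomAssoc (fun x y => mul x y) (fun x => α x))
    (hmult : ∀ x y, α (mul x y) = mul (α x) (α y)) :
    IsHomJordan (fun x y => mul x y + mul y x) (fun x => α x) := by
  have h : ∀ a b c, mul (mul a b) (α c) = mul (α a) (mul b c) := hassoc
  constructor
  · intro x y; exact add_comm _ _
  · intro x y
    simp only [map_add, LinearMap.add_apply, hmult]
    have e1 : mul (mul (mul x x) (α y)) (α (α x))
        = mul (mul (α x) (α x)) (mul (α y) (α x)) := by
      rw [h (mul x x) (α y) (α x), hmult]
    have e2 : mul (mul (α y) (mul x x)) (α (α x))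
        = mul (mul (α y) (α x)) (mul (α x) (α x)) := by
      rw [h (α y) (mul x x) (α x), h x x x, ← h (α y) (α x) (mul x x), hmult]
    have e3 : mul (α (α x)) (mul (mul x x) (α y))
        = mul (mul (α x) (α x)) (mul (α x) (α y)) := by
      rw [← h (α x) (mul x x) (α y), ← h x x x, h (mul x x) (α x) (α y), hmult]
    have e4 : mul (α (α x)) (mul (α y) (mul x x))
        = mul (mul (α x) (α y)) (mul (α x) (α x)) := by
      rw [← h (α x) (α y) (mul x x), hmult]
    rw [e1, e2, e3, e4]
    abel
end

section
/- Let (A,·,α) be a Hom-associative algebra and d:A→A a linear map with d∘α = α∘d, d(x·y) = d(x)·y + x·d(y), and d² = 0. Define x ⊣ y := x·d(y) and x ⊢ y := d(x)·y. Then (A,⊢,⊣,α) is a Hom-associative dialgebra. -/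
theorem stmt2 {K : Type*} [Field K] {A : Type*} [AddCommGroup A] [Module K A]
    (mul : A →ₗ[K] A →ₗ[K] A) (α : A →ₗ[K] A) (d : A →ₗ[K] A)
    (hassoc : IsHomAssoc (fun x y => mul x y) (fun x => α x))
    (hdα : ∀ x, d (α x) = α (d x))
    (hleib : ∀ x y, d (mul x y) = mul (d x) y + mul x (d y))
    (hd2 : ∀ x, d (d x) = 0) :
    IsHomDialg (fun x y => mul (d x) y) (fun x y => mul x (d y)) (fun x => α x) := by
  have H : ∀ x y z : A, mul (mul x y) (α z) = mul (α x) (mul y z) := hassoc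
  have S : ∀ x y z : A,
      (fun x y => mul x (d y)) ((fun x y => mul (d x) y) x y) ((fun x : A => α x) z)
        = (fun x y => mul (d x) y) ((fun x : A => α x) x) ((fun x y => mul x (d y)) y z) := by
    intro x y z
    simp only []
    simp only [hdα]; exact H (d x) y (d z)
  refine ⟨fun x y z => ?_, fun x y z => ?_, fun x y z => ?_, fun x y z => ?_, fun x y z => ?_⟩
  · simp [hleib, hd2]
  · simp [hleib, hd2]
  · simp only [hleib, hd2, map_add, LinearMap.map_zero, LinearMap.zero_apply, add_zero, zero_add]
    rw [hdα]; exact H x (d y) (d z)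
  · simp only [hleib, hd2, hdα, map_add, LinearMap.map_zero, LinearMap.zero_apply,
      add_zero, zero_add]
    exact H (d x) (d y) z
  · exact S x y z
end

section
/- Let (A,⊢,⊣,α) be a Hom-associative dialgebra. Then (A,{·,·},α) with {x,y} := x⊢y − y⊣x is a Hom-Leibniz algebra, i.e. {α(x),{y,z}} = {{x,y},α(z)} + {α(y),{x,z}} for all x,y,z. -/
theorem stmt4 {K : Type*} [Field K] {A : Type*} [AddCommGroup A] [Module K A]
    (vd dv : A →ₗ[K] A →ₗ[K] A) (α : A →ₗ[K] A)
    (h : IsHomDialg (fun x y => vd x y) (fun x y => dv x y) (fun x => α x)) :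
    IsHomLeibniz (fun x y => vd x y - dv y x) (fun x => α x) := by
  obtain ⟨h1, h2, h3, h4, h5⟩ := h
  intro x y z
  simp only [map_sub, LinearMap.sub_apply]
  simp only at h1 h2 h3 h4 h5
  simp only [h1, h4, h5, h3, ← h2]
  abel
end

section
/- Let (A,·,α) be a Hom-associative algebra and (V,l,r,β) a bimodule over it. On A⊕V define α'(x+u)=α(x)+β(u), (x+u)⊣'(y+v) = x·y + r(y)u, and (x+u)⊢'(y+v) = x·y + l(x)v. Then (A⊕V, ⊢', ⊣', α') is a Hom-associative dialgebra (the hemisemi-direct product). -/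
theorem stmt5 {K : Type*} [Field K] {A V : Type*} [AddCommGroup A] [Module K A]
    [AddCommGroup V] [Module K V]
    (mul : A →ₗ[K] A →ₗ[K] A) (α : A →ₗ[K] A)
    (l r : A →ₗ[K] V →ₗ[K] V) (β : V →ₗ[K] V)
    (hassoc : IsHomAssoc (fun x y => mul x y) (fun x => α x))
    (hbim : IsBimodule (fun x y => mul x y) (fun x => α x)
      (fun x u => l x u) (fun x u => r x u) (fun u => β u)) :
    IsHomDialg
      (fun p q : A × V => (mul p.1 q.1, l p.1 q.2))
      (fun p q : A × V => (mul p.1 q.1, r q.1 p.2))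
      (fun p : A × V => (α p.1, β p.2)) := by
  obtain ⟨h1, h2, h3, h4, h5⟩ := hbim
  refine ⟨fun x y z => rfl, fun x y z => rfl, ?_, ?_, ?_⟩
  · intro x y z
    exact Prod.ext (hassoc x.1 y.1 z.1) (h4 y.1 z.1 x.2).symm
  · intro x y z
    exact Prod.ext (hassoc x.1 y.1 z.1) (h3 x.1 y.1 z.2)
  · intro x y z
    exact Prod.ext (hassoc x.1 y.1 z.1) (h5 x.1 z.1 y.2).symm
end

section
/- Let (A,·,α) be a Hom-associative algebra with bimodule (V,l,r,β). A linear map K:V→A with K∘β=α∘K is a relative averaging operator (i.e. K(u)·K(v) = K(l(K(u))v) = K(r(K(v))u) for all u,v∈V) if and only if the graph {K(u)+u : u∈V} ⊆ A⊕V is closed under both products ⊢' and ⊣' of the hemisemi-direct product Hom-associative dialgebra structure on A⊕V given by (x+u)⊢'(y+v)=x·y+l(x)v and (x+u)⊣'(y+v)=x·y+r(y)u. -/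
theorem stmt6 {K : Type*} [Field K] {A V : Type*} [AddCommGroup A] [Module K A]
    [AddCommGroup V] [Module K V]
    (mul : A →ₗ[K] A →ₗ[K] A) (α : A →ₗ[K] A)
    (l r : A →ₗ[K] V →ₗ[K] V) (β : V →ₗ[K] V)
    (hassoc : IsHomAssoc (fun x y => mul x y) (fun x => α x))
    (hbim : IsBimodule (fun x y => mul x y) (fun x => α x)
      (fun x u => l x u) (fun x u => r x u) (fun u => β u))
    (Kop : V →ₗ[K] A) (hKβ : ∀ u, Kop (β u) = α (Kop u)) :
    (∀ u v, mul (Kop u) (Kop v) = Kop (l (Kop u) v)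
        ∧ mul (Kop u) (Kop v) = Kop (r (Kop v) u))
    ↔ (∀ p q : A × V, (∃ u, p = (Kop u, u)) → (∃ v, q = (Kop v, v)) →
        (∃ w, ((mul p.1 q.1, l p.1 q.2) : A × V) = (Kop w, w))
        ∧ (∃ w, ((mul p.1 q.1, r q.1 p.2) : A × V) = (Kop w, w))) := by
  constructor
  · rintro h p q ⟨u, rfl⟩ ⟨v, rfl⟩
    exact ⟨⟨l (Kop u) v, by simp [(h u v).1]⟩, ⟨r (Kop v) u, by simp [(h u v).2]⟩⟩
  · intro h u v
    obtain ⟨⟨w1, hw1⟩, ⟨w2, hw2⟩⟩ := h (Kop u, u) (Kop v, v) ⟨u, rfl⟩ ⟨v, rfl⟩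
    simp only [Prod.mk.injEq] at hw1 hw2
    exact ⟨hw1.2 ▸ hw1.1, hw2.2 ▸ hw2.1⟩
end

section
/- Let (A,·,α) be a Hom-associative algebra with bimodule (V,l,r,β), and K:V→A a relative averaging operator (K∘β=α∘K and K(u)·K(v)=K(l(K(u))v)=K(r(K(v))u)). Define u ⊢_K v := l(K(u))v and u ⊣_K v := r(K(v))u on V. Then (V, ⊢_K, ⊣_K, β) is a Hom-associative dialgebra. -/
theorem stmt7 {K : Type*} [Field K] {A V : Type*} [AddCommGroup A] [Module K A]
    [AddCommGroup V] [Module K V]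
    (mul : A →ₗ[K] A →ₗ[K] A) (α : A →ₗ[K] A)
    (l r : A →ₗ[K] V →ₗ[K] V) (β : V →ₗ[K] V)
    (hassoc : IsHomAssoc (fun x y => mul x y) (fun x => α x))
    (hbim : IsBimodule (fun x y => mul x y) (fun x => α x)
      (fun x u => l x u) (fun x u => r x u) (fun u => β u))
    (Kop : V →ₗ[K] A) (hKβ : ∀ u, Kop (β u) = α (Kop u))
    (hKl : ∀ u v, mul (Kop u) (Kop v) = Kop (l (Kop u) v))
    (hKr : ∀ u v, mul (Kop u) (Kop v) = Kop (r (Kop v) u)) :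
    IsHomDialg (fun u v => l (Kop u) v) (fun u v => r (Kop v) u) (fun u => β u) := by
  obtain ⟨h1, h2, h3, h4, h5⟩ := hbim
  dsimp only at h1 h2 h3 h4 h5 ⊢
  refine ⟨fun x y z => ?_, fun x y z => ?_, fun x y z => ?_, fun x y z => ?_, fun x y z => ?_⟩
  · dsimp only; rw [← hKr, hKl]
  · dsimp only; rw [← hKr, hKl]
  · dsimp only; rw [hKβ, ← hKr y z, h4]
  · dsimp only; rw [hKβ, ← hKl, h3]
  · dsimp only; rw [hKβ x, hKβ z, ← h5]
end

section
/- Let (A,·,α) be a Hom-associative algebra with bimodule (V,l,r,β). A linear map K:V→A is a relative averaging operator if and only if the map N_K : A⊕V → A⊕V, N_K(x+u) = K(u), is a Nijenhuis operator on the hemisemi-direct product Hom-associative dialgebra A⊕V, i.e. N_K commutes with α⊕β and for both products μ ∈ {⊢',⊣'}: μ(N_K a, N_K b) = N_K(μ(N_K a, b) + μ(a, N_K b) − N_K μ(a,b)). -/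
theorem stmt8 {K : Type*} [Field K] {A V : Type*} [AddCommGroup A] [Module K A]
    [AddCommGroup V] [Module K V]
    (mul : A →ₗ[K] A →ₗ[K] A) (α : A →ₗ[K] A)
    (l r : A →ₗ[K] V →ₗ[K] V) (β : V →ₗ[K] V)
    (hassoc : IsHomAssoc (fun x y => mul x y) (fun x => α x))
    (hbim : IsBimodule (fun x y => mul x y) (fun x => α x)
      (fun x u => l x u) (fun x u => r x u) (fun u => β u))
    (Kop : V →ₗ[K] A) :
    ((∀ u, Kop (β u) = α (Kop u)) ∧
      (∀ u v, mul (Kop u) (Kop v) = Kop (l (Kop u) v)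
        ∧ mul (Kop u) (Kop v) = Kop (r (Kop v) u)))
    ↔ (let N : A × V → A × V := fun p => (Kop p.2, 0)
       let tw : A × V → A × V := fun p => (α p.1, β p.2)
       let mL : A × V → A × V → A × V := fun p q => (mul p.1 q.1, l p.1 q.2)
       let mR : A × V → A × V → A × V := fun p q => (mul p.1 q.1, r q.1 p.2)
       (∀ p, N (tw p) = tw (N p)) ∧
       (∀ p q, mL (N p) (N q) = N (mL (N p) q + mL p (N q) - N (mL p q))) ∧
       (∀ p q, mR (N p) (N q) = N (mR (N p) q + mR p (N q) - N (mR p q)))) := by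
  constructor
  · rintro ⟨h1, h2⟩
    refine ⟨?_, ?_, ?_⟩
    · intro p; simp [h1 p.2]
    · intro p q
      have := (h2 p.2 q.2).1
      simp [Prod.ext_iff, this]
    · intro p q
      have := (h2 p.2 q.2).2
      simp [Prod.ext_iff, this]
  · rintro ⟨h1, h2, h3⟩
    refine ⟨fun u => ?_, fun u v => ⟨?_, ?_⟩⟩
    · have := h1 (0, u); simpa [Prod.ext_iff] using this
    · have := h2 (0, u) (0, v); simpa [Prod.ext_iff] using this
    · have := h3 (0, u) (0, v); simpa [Prod.ext_iff] using this
end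

section
/- Let (A,[·,·],α) be a Hom-Lie algebra with representation (V,ρ,β), and let K:V→A be a relative averaging operator, i.e. K∘β=α∘K and [K(u),K(v)] = K(ρ(K(u))v). Then (V, {·,·}_K, β) with {u,v}_K := ρ(K(u))v is a Hom-Leibniz algebra. -/
theorem stmt11 {K : Type*} [Field K] {A V : Type*} [AddCommGroup A] [Module K A]
    [AddCommGroup V] [Module K V]
    (br : A →ₗ[K] A →ₗ[K] A) (α : A →ₗ[K] A)
    (rho : A →ₗ[K] V →ₗ[K] V) (β : V →ₗ[K] V)
    (hlie : IsHomLie (fun x y => br x y) (fun x => α x))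
    (hrep : IsHomLieRep (fun x y => br x y) (fun x => α x)
      (fun x u => rho x u) (fun u => β u))
    (Kop : V →ₗ[K] A) (hKβ : ∀ u, Kop (β u) = α (Kop u))
    (hK : ∀ u v, br (Kop u) (Kop v) = Kop (rho (Kop u) v)) :
    IsHomLeibniz (fun u v => rho (Kop u) v) (fun u => β u) := by
  intro u v w
  have h2 := hrep.2 (Kop u) (Kop v) w
  simp only [] at h2 ⊢
  rw [hK u v] at h2
  simp only [hKβ]
  rw [h2]
  abel
end

section
/- Let (A,•,α) be a left Hom-Jordan dialgebra and φ:A→A a morphism (φ∘α=α∘φ and φ(x•y)=φ(x)•φ(y)). Then A_φ := (A, •_φ, φ∘α) with x •_φ y := φ(x•y) is again a left Hom-Jordan dialgebra. In particular, if (A,•) is a Jordan dialgebra and α:A→A an algebra endomorphism, then (A, α∘•, α) is a Hom-Jordan dialgebra. -/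
theorem yoneda_key {A : Type*} [AddCommGroup A]
    (m : A → A → A) (a : A → A) (φ : A → A)
    (h : IsHomJordanDialg m a)
    (hφa : ∀ x, φ (a x) = a (φ x))
    (hφm : ∀ x y, φ (m x y) = m (φ x) (φ y)) :
    IsHomJordanDialg (fun x y => φ (m x y)) (fun x => φ (a x)) := by
  obtain ⟨h1, h2, h3⟩ := h
  refine ⟨?_, ?_, ?_⟩
  · intro x1 x2 x3
    simp only [hφm, hφa]
    exact h1 _ _ _
  · intro x1 x2 x3 x4
    simp only [hφm, hφa]
    exact h2 _ _ _ _
  · intro x1 x2 x3 x4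
    simp only [hφm, hφa]
    exact h3 _ _ _ _

theorem stmt14 {A : Type*} [AddCommGroup A]
    (m : A → A → A) (a : A → A) (φ : A → A)
    (h : IsHomJordanDialg m a)
    (hφa : ∀ x, φ (a x) = a (φ x))
    (hφm : ∀ x y, φ (m x y) = m (φ x) (φ y)) :
    IsHomJordanDialg (fun x y => φ (m x y)) (fun x => φ (a x)) ∧
    (∀ (m' : A → A → A) (a' : A → A),
      IsHomJordanDialg m' id → (∀ x y, a' (m' x y) = m' (a' x) (a' y)) →
      IsHomJordanDialg (fun x y => a' (m' x y)) a') := by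
  refine ⟨yoneda_key m a φ h hφa hφm, ?_⟩
  intro m' a' h' hm'
  exact yoneda_key m' id a' h' (fun _ => rfl) hm'
end

section
/- Let (A,·,α) be a Hom-associative algebra acting on (V,·_V,β) via (l,r). On A⊕V define (x+u)⊢'(y+v)=x·y+l(x)v, (x+u)⊣'(y+v)=x·y+r(y)u, (x+u)⊥'(y+v)=x·y+u·_V v, and twist (α⊕β)(x+u)=α(x)+β(u). Then (A⊕V, ⊢', ⊣', ⊥', α⊕β) is a Hom-associative trialgebra. -/
theorem stmt17 {K : Type*} [Field K] {A V : Type*} [AddCommGroup A] [Module K A]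
    [AddCommGroup V] [Module K V]
    (mul : A →ₗ[K] A →ₗ[K] A) (α : A →ₗ[K] A)
    (l r : A →ₗ[K] V →ₗ[K] V) (β : V →ₗ[K] V) (mulV : V →ₗ[K] V →ₗ[K] V)
    (hassoc : IsHomAssoc (fun x y => mul x y) (fun x => α x))
    (hact : IsHomAssocAction (fun x y => mul x y) (fun x => α x)
      (fun x u => l x u) (fun x u => r x u) (fun u => β u)
      (fun u v => mulV u v)) :
    IsHomTrialg
      (fun p q : A × V => (mul p.1 q.1, l p.1 q.2))
      (fun p q : A × V => (mul p.1 q.1, r q.1 p.2))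
      (fun p q : A × V => (mul p.1 q.1, mulV p.2 q.2))
      (fun p : A × V => (α p.1, β p.2)) := by
  obtain ⟨⟨hbl, hbr, hl, hr, hlr⟩, hV, hal, har, halr⟩ := hact
  refine ⟨⟨?_, ?_, ?_, ?_, ?_⟩, ?_, ?_, ?_, ?_, ?_, ?_⟩ <;> intro x y z
  · exact Prod.ext rfl rfl
  · exact Prod.ext rfl rfl
  · exact Prod.ext (hassoc x.1 y.1 z.1) (hr y.1 z.1 x.2).symm
  · exact Prod.ext (hassoc x.1 y.1 z.1) (hl x.1 y.1 z.2)
  · exact Prod.ext (hassoc x.1 y.1 z.1) (hlr x.1 z.1 y.2).symm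
  · exact Prod.ext (hassoc x.1 y.1 z.1) (hV x.2 y.2 z.2)
  · exact Prod.ext (hassoc x.1 y.1 z.1) (hr y.1 z.1 x.2).symm
  · exact Prod.ext (hassoc x.1 y.1 z.1) (har z.1 x.2 y.2)
  · exact Prod.ext (hassoc x.1 y.1 z.1) (halr y.1 x.2 z.2).symm
  · exact Prod.ext (hassoc x.1 y.1 z.1) (hal x.1 y.2 z.2).symm
  · exact Prod.ext (hassoc x.1 y.1 z.1) (hl x.1 y.1 z.2)
end

section
/- Let (A,⊢,⊣,⊥,α) be a Hom-associative trialgebra. Define {x,y} := x⊢y − y⊣x and [x,y] := x⊥y − y⊥x. Then (A,{·,·},[·,·],α) is a left Hom-Leibniz trialgebra: (A,{·,·},α) is a Hom-Leibniz algebra, (A,[·,·],α) is a Hom-Lie algebra, and {α(x),[y,z]} = [{x,y},α(z)] + [α(y),{x,z}] and {[x,y],α(z)} = {{x,y},α(z)} hold. -/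
theorem stmt18 {K : Type*} [Field K] {A : Type*} [AddCommGroup A] [Module K A]
    (vd dv mp : A →ₗ[K] A →ₗ[K] A) (α : A →ₗ[K] A)
    (h : IsHomTrialg (fun x y => vd x y) (fun x y => dv x y)
      (fun x y => mp x y) (fun x => α x)) :
    IsHomLeibnizTrialg
      (fun x y => vd x y - dv y x)
      (fun x y => mp x y - mp y x)
      (fun x => α x) := by
  obtain ⟨⟨d1, d2, d3, d4, d5⟩, ha, t3, t4, t5, t6, t7⟩ := h
  have d1' : ∀ x y z : A, vd (dv x y) (α z) = vd (vd x y) (α z) := d1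
  have d2' : ∀ x y z : A, dv (α x) (vd y z) = dv (α x) (dv y z) := fun x y z => (d2 x y z).symm
  have d3' : ∀ x y z : A, dv (dv x y) (α z) = dv (α x) (dv y z) := d3
  have d4' : ∀ x y z : A, vd (vd x y) (α z) = vd (α x) (vd y z) := d4
  have d5' : ∀ x y z : A, dv (vd x y) (α z) = vd (α x) (dv y z) := d5
  have ha' : ∀ x y z : A, mp (mp x y) (α z) = mp (α x) (mp y z) := ha
  have t3a : ∀ x y z : A, dv (dv x y) (α z) = dv (α x) (mp y z) := t3
  have t3' : ∀ x y z : A, dv (α x) (mp y z) = dv (α x) (dv y z) := by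
    intro x y z; rw [← t3a, d3']
  have t4' : ∀ x y z : A, dv (mp x y) (α z) = mp (α x) (dv y z) := t4
  have t5' : ∀ x y z : A, mp (dv x y) (α z) = mp (α x) (vd y z) := t5
  have t6' : ∀ x y z : A, mp (vd x y) (α z) = vd (α x) (mp y z) := t6
  have t7' : ∀ x y z : A, vd (mp x y) (α z) = vd (α x) (vd y z) := t7
  refine ⟨?_, ⟨?_, ?_⟩, ?_, ?_⟩
  · intro x y z
    simp only [map_sub, LinearMap.sub_apply]
    simp only [d1', d4', d5', d3', d2', ha', t3', t4', t5', t6', t7']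
    abel
  · intro x y
    show mp x y - mp y x = -(mp y x - mp x y)
    abel
  · intro x y z
    simp only [map_sub, LinearMap.sub_apply]
    simp only [ha']
    abel
  · intro x y z
    simp only [map_sub, LinearMap.sub_apply]
    simp only [d1', d4', d5', d3', d2', ha', t3', t4', t5', t6', t7']
    abel
  · intro x y z
    simp only [map_sub, LinearMap.sub_apply]
    simp only [d1', d4', d5', d3', d2', ha', t3', t4', t5', t6', t7']
end

section
/- Let (A,[·,·],α) be a Hom-Lie algebra acting on a Hom-Lie algebra (V,[·,·]_V,β) via ρ, and let H:V→A be a homomorphic relative averaging operator, i.e. H∘β=α∘H, [H(u),H(v)] = H(ρ(H(u))v), and H([u,v]_V) = [H(u),H(v)]. Then (V, {·,·}_H, [·,·]_V, β) with {u,v}_H := ρ(H(u))v is a left Hom-Leibniz trialgebra. -/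
theorem stmt19 {K : Type*} [Field K] {A V : Type*} [AddCommGroup A] [Module K A]
    [AddCommGroup V] [Module K V]
    (br : A →ₗ[K] A →ₗ[K] A) (α : A →ₗ[K] A)
    (rho : A →ₗ[K] V →ₗ[K] V) (β : V →ₗ[K] V) (brV : V →ₗ[K] V →ₗ[K] V)
    (hlie : IsHomLie (fun x y => br x y) (fun x => α x))
    (hact : IsHomLieAction (fun x y => br x y) (fun x => α x)
      (fun x u => rho x u) (fun u => β u) (fun u v => brV u v))
    (H : V →ₗ[K] A) (hHβ : ∀ u, H (β u) = α (H u))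
    (hHav : ∀ u v, br (H u) (H v) = H (rho (H u) v))
    (hHm : ∀ u v, H (brV u v) = br (H u) (H v)) :
    IsHomLeibnizTrialg
      (fun u v => rho (H u) v)
      (fun u v => brV u v)
      (fun u => β u) := by
  obtain ⟨⟨hrep1, hrep2⟩, hVlie, hactc⟩ := hact
  refine ⟨?_, hVlie, ?_, ?_⟩
  · intro u v w
    have h1 := hrep2 (H u) (H v) w
    have h2 := hHav u v
    simp only [] at h1
    simp only [hHβ]
    rw [← h2, h1]
    abel
  · intro u v w
    simp only [hHβ]
    exact hactc (H u) v w
  · intro u v w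
    simp only [hHm, hHav]
end
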